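/- arXiv:0804.3851 — 4 statements merged into one kernel-verified Lean document; each statement's English description precedes it below -/
import Mathlib

section
/- Let h be a nondegenerate σ-hermitian form of Witt index 2 on a K-vector space V of finite dimension n ≥ 5. Then for every 1-dimensional totally isotropic subspace P of V and every 2-dimensional totally isotropic subspace M of V with P not contained in M, there exists exactly one 2-dimensional totally isotropic subspace L of V such that P ⊆ L and L ∩ M ≠ {0}. (This is the main axiom showing that the classical quadrangle Q(V,h), whose points are the 1-dimensional totally isotropic subspaces and whose lines are the 2-dimensional totally isotropic subspaces of V, is a generalized quadrangle.) -/
/-!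
Let `p` span `P`. Every totally isotropic `L ∋ p` meets `M` inside `M₀ := M ∩ p^⊥`.
Since `p ∉ M` and totally isotropic subspaces have dimension at most `2`, `p` is not orthogonal
to all of `M` (else `M + ⟨p⟩` would be a totally isotropic `3`-space), so the hyperplane `p^⊥`
cuts `M` in a line: `dim M₀ = 1`. Hence `M₀ + ⟨p⟩` is the required `L`, and any other
candidate `L` contains both `p` and `M₀`, so it coincides with it by dimension.
-/

open Module Submodule

section Isotropy

variable {K V : Type*} [Field K] [AddCommGroup V] [Module K V] {σ : K →+* K}

def IsTotallyIsotropic (B : V →ₗ[K] V →ₛₗ[σ] K) (U : Submodule K V) : Prop :=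
  ∀ x ∈ U, ∀ y ∈ U, B x y = 0

variable {B : V →ₗ[K] V →ₛₗ[σ] K}

theorem IsTotallyIsotropic.mono {U W : Submodule K V} (hW : IsTotallyIsotropic B W)
    (hUW : U ≤ W) : IsTotallyIsotropic B U :=
  fun x hx y hy => hW x (hUW hx) y (hUW hy)

theorem IsTotallyIsotropic.sup_span_singleton (hB : B.IsRefl) {U : Submodule K V}
    (hU : IsTotallyIsotropic B U) {v : V} (hv : B v v = 0) (hUv : ∀ u ∈ U, B u v = 0) :
    IsTotallyIsotropic B (U ⊔ span K {v}) := by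
  intro x hx y hy
  obtain ⟨u, hu, _, ha, rfl⟩ := mem_sup.mp hx
  obtain ⟨u', hu', _, hb, rfl⟩ := mem_sup.mp hy
  obtain ⟨a, rfl⟩ := mem_span_singleton.mp ha
  obtain ⟨b, rfl⟩ := mem_span_singleton.mp hb
  simp [hU u hu u' hu', hUv u hu, hB _ _ (hUv u' hu'), hv]

end Isotropy

section FiniteDimensional

variable {K V : Type*} [Field K] [AddCommGroup V] [Module K V] [FiniteDimensional K V]

theorem Submodule.finrank_le_finrank_inf_ker_add_one (M : Submodule K V) (f : Dual K V) :
    finrank K M ≤ finrank K ↥(M ⊓ LinearMap.ker f) + 1 := by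
  rcases eq_or_ne f 0 with rfl | hf
  · rw [LinearMap.ker_zero, inf_top_eq]
    omega
  have hsup := finrank_sup_add_finrank_inf_eq M (LinearMap.ker f)
  have hker := f.finrank_ker_add_one_of_ne_zero hf
  have hle := (M ⊔ LinearMap.ker f).finrank_le
  omega

theorem Submodule.eq_of_le_of_finrank_le_one {U W : Submodule K V} (hUW : U ≤ W)
    (hW : finrank K W ≤ 1) (hU : U ≠ ⊥) : U = W :=
  eq_of_le_of_finrank_le hUW (hW.trans (one_le_finrank_iff.mpr hU))

variable {σ : K →+* K} {B : V →ₗ[K] V →ₛₗ[σ] K}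

theorem existsUnique_isTotallyIsotropic_plane_through_point_meeting_plane (hB : B.IsRefl)
    (hmax : ∀ U : Submodule K V, IsTotallyIsotropic B U → finrank K U ≤ 2)
    {P M : Submodule K V} (hP : finrank K P = 1) (hPi : IsTotallyIsotropic B P)
    (hM : finrank K M = 2) (hMi : IsTotallyIsotropic B M) (hPM : ¬ P ≤ M) :
    ∃! L : Submodule K V, finrank K L = 2 ∧ IsTotallyIsotropic B L ∧ P ≤ L ∧ L ⊓ M ≠ ⊥ := by
  have := (finrank_le_one_iff_isPrincipal P).mp hP.le
  obtain ⟨p, rfl⟩ := IsPrincipal.principal P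
  have hpM : p ∉ M := fun h => hPM ((span_singleton_le_iff_mem p M).mpr h)
  have hpp : B p p = 0 := hPi p (mem_span_singleton_self p) p (mem_span_singleton_self p)
  set M₀ := M ⊓ LinearMap.ker (B.flip p)
  have hM₀i : IsTotallyIsotropic B M₀ := hMi.mono inf_le_left
  have hpM₀ : p ∉ M₀ := fun h => hpM h.1
  have hM₀M : M₀ < M := by
    refine inf_le_left.lt_of_ne fun hM₀ => ?_
    have hMp : ∀ m ∈ M, B m p = 0 := fun m hm => (hM₀.ge hm).2
    have h3 := finrank_sup_span_singleton hpM
    have h3le := hmax _ (hMi.sup_span_singleton hB hpp hMp)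
    omega
  have hM₀ : finrank K M₀ = 1 := by
    have hlt := finrank_lt_finrank_of_lt hM₀M
    have hge : finrank K M ≤ finrank K M₀ + 1 := M.finrank_le_finrank_inf_ker_add_one (B.flip p)
    omega
  have hmeet : ∀ L : Submodule K V, IsTotallyIsotropic B L → p ∈ L → L ⊓ M ≤ M₀ :=
    fun L hL hpL x hx => ⟨hx.2, hL x hx.1 p hpL⟩
  refine ⟨M₀ ⊔ span K {p}, ⟨?_, hM₀i.sup_span_singleton hB hpp fun m hm => hm.2,
    le_sup_right, ?_⟩, ?_⟩
  · rw [finrank_sup_span_singleton hpM₀, hM₀]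
  · exact ne_bot_of_le_ne_bot (one_le_finrank_iff.mp hM₀.ge) (le_inf le_sup_left inf_le_left)
  · rintro L ⟨hL, hLi, hPL, hLM⟩
    have hM₀L : M₀ ≤ L := eq_of_le_of_finrank_le_one
      (hmeet L hLi (hPL (mem_span_singleton_self p))) hM₀.le hLM ▸ inf_le_left
    refine (eq_of_le_of_finrank_eq (sup_le hM₀L hPL) ?_).symm
    rw [hL, finrank_sup_span_singleton hpM₀, hM₀]

end FiniteDimensional

theorem classical_quadrangle_axiom_general
    (K V : Type*) [Field K] [AddCommGroup V] [Module K V] [FiniteDimensional K V]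
    (σ : K ≃+* K)
    (h : V → V → K)
    (hadd₁ : ∀ x x' y, h (x + x') y = h x y + h x' y)
    (hadd₂ : ∀ x y y', h x (y + y') = h x y + h x y')
    (hsmul : ∀ (a b : K) (x y : V), h (a • x) (b • y) = a * σ b * h x y)
    (hherm : ∀ x y, h x y = σ (h y x))
    (hwittmax : ∀ U : Submodule K V, (∀ x ∈ U, ∀ y ∈ U, h x y = 0) →
      Module.finrank K U ≤ 2) :
    ∀ P M : Submodule K V,
      Module.finrank K P = 1 → (∀ x ∈ P, ∀ y ∈ P, h x y = 0) →
      Module.finrank K M = 2 → (∀ x ∈ M, ∀ y ∈ M, h x y = 0) →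
      ¬ P ≤ M →
      ∃! L : Submodule K V,
        Module.finrank K L = 2 ∧ (∀ x ∈ L, ∀ y ∈ L, h x y = 0) ∧ P ≤ L ∧ L ⊓ M ≠ ⊥ := by
  let B : V →ₗ[K] V →ₛₗ[(σ : K →+* K)] K := LinearMap.mk₂'ₛₗ _ _ h hadd₁
    (fun a x y => by simpa using hsmul a 1 x y) hadd₂ (fun b x y => by simpa using hsmul 1 b x y)
  have hB : B.IsRefl := fun x y hxy => by
    change h y x = 0
    rw [hherm, show h x y = 0 from hxy, map_zero]
  intro P M hP hPi hM hMi hPM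
  exact existsUnique_isTotallyIsotropic_plane_through_point_meeting_plane hB hwittmax
    hP hPi hM hMi hPM

/-- A σ-hermitian form `h` of Witt index 2 on a vector space of dimension at least 5
yields a generalized quadrangle: for every 1-dimensional totally isotropic subspace `P`
and every 2-dimensional totally isotropic subspace `M` with `P ⊄ M` there is exactly one
2-dimensional totally isotropic subspace `L` with `P ⊆ L` and `L ∩ M ≠ 0`. -/
theorem classical_quadrangle_axiom
    (K V : Type*) [Field K] [AddCommGroup V] [Module K V] [FiniteDimensional K V]
    (hchar : (2 : K) ≠ 0)
    (hdim : 5 ≤ Module.finrank K V)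
    (σ : K ≃+* K) (hσ : ∀ a, σ (σ a) = a)
    (h : V → V → K)
    (hadd₁ : ∀ x x' y, h (x + x') y = h x y + h x' y)
    (hadd₂ : ∀ x y y', h x (y + y') = h x y + h x y')
    (hsmul : ∀ (a b : K) (x y : V), h (a • x) (b • y) = a * σ b * h x y)
    (hherm : ∀ x y, h x y = σ (h y x))
    (hnondeg : ∀ x, (∀ y, h x y = 0) → x = 0)
    (hwitt₂ : ∃ U : Submodule K V, Module.finrank K U = 2 ∧ ∀ x ∈ U, ∀ y ∈ U, h x y = 0)
    (hwittmax : ∀ U : Submodule K V, (∀ x ∈ U, ∀ y ∈ U, h x y = 0) →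
      Module.finrank K U ≤ 2) :
    ∀ P M : Submodule K V,
      Module.finrank K P = 1 → (∀ x ∈ P, ∀ y ∈ P, h x y = 0) →
      Module.finrank K M = 2 → (∀ x ∈ M, ∀ y ∈ M, h x y = 0) →
      ¬ P ≤ M →
      ∃! L : Submodule K V,
        Module.finrank K L = 2 ∧ (∀ x ∈ L, ∀ y ∈ L, h x y = 0) ∧ P ≤ L ∧ L ⊓ M ≠ ⊥ :=
  classical_quadrangle_axiom_general K V σ h hadd₁ hadd₂ hsmul hherm hwittmax
end

section
/- Let L₁ and L₂ be 2-dimensional subspaces of V, let xᵢ, yᵢ be a basis of Lᵢ, and set uᵢ = xᵢ ∧ yᵢ for i = 1, 2. Then L₁ ∩ L₂ ≠ {0} if and only if u₁ ∧ u₂ = 0. -/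
/-!
Write `u₁ ∧ u₂ = x₁ ∧ y₁ ∧ x₂ ∧ y₂`. Over a field, a wedge of vectors vanishes exactly when the
vectors are linearly dependent, and two linearly independent pairs together are linearly dependent
exactly when their spans meet nontrivially.
-/

open ExteriorAlgebra Submodule

theorem linearIndependent_fin_append_iff {R M : Type*} [Ring R] [AddCommGroup M] [Module R M]
    {m n : ℕ} {u : Fin m → M} {v : Fin n → M} :
    LinearIndependent R (Fin.append u v) ↔
      LinearIndependent R u ∧ LinearIndependent R v ∧
        Disjoint (span R (Set.range u)) (span R (Set.range v)) := by
  rw [← linearIndependent_equiv finSumFinEquiv, linearIndependent_sum]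
  have : Fin.append u v ∘ finSumFinEquiv = Sum.elim u v := Fin.append_comp_sumElim
  simp only [this, Sum.elim_comp_inl, Sum.elim_comp_inr]

namespace ExteriorAlgebra

variable {K E : Type*} [Field K] [AddCommGroup E] [Module K E]

theorem ιMulti_ne_zero {n : ℕ} {v : Fin n → E} (hv : LinearIndependent K v) :
    ιMulti K n v ≠ 0 := fun h ↦ by
  -- `univ` is the only `n`-subset of `Fin n`; its member of `ιMulti_family` is `v` permuted.
  let s : Set.powersetCard (Fin n) n := ⟨Finset.univ, by simp⟩
  let e := Set.powersetCard.ofFinEmbEquiv.symm s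
  let σ : Equiv.Perm (Fin n) :=
    Equiv.ofBijective e (Finite.injective_iff_bijective.mp e.injective)
  refine (exteriorPower.ιMulti_family_linearIndependent_field n hv).ne_zero s (Subtype.ext ?_)
  change ιMulti K n (v ∘ σ) = 0
  rw [AlternatingMap.map_perm, h, smul_zero]

theorem ιMulti_eq_zero_iff {n : ℕ} {v : Fin n → E} :
    ιMulti K n v = 0 ↔ ¬LinearIndependent K v :=
  ⟨fun h hv ↦ ιMulti_ne_zero hv h, AlternatingMap.map_linearDependent _ _⟩

theorem ι_mul_ι_eq_ιMulti (x y : E) : ι K x * ι K y = ιMulti K 2 ![x, y] := by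
  simp [Matrix.vecTail]

end ExteriorAlgebra

theorem plucker_confluence_general
    (K V : Type*) [Field K] [AddCommGroup V] [Module K V]
    (L₁ L₂ : Submodule K V) (x₁ y₁ x₂ y₂ : V)
    (hli₁ : LinearIndependent K ![x₁, y₁])
    (hL₁ : L₁ = Submodule.span K {x₁, y₁})
    (hli₂ : LinearIndependent K ![x₂, y₂])
    (hL₂ : L₂ = Submodule.span K {x₂, y₂}) :
    L₁ ⊓ L₂ ≠ ⊥ ↔ (ι K x₁ * ι K y₁) * (ι K x₂ * ι K y₂) = 0 := by
  rw [ι_mul_ι_eq_ιMulti, ι_mul_ι_eq_ιMulti, ιMulti_mul_ιMulti, ιMulti_eq_zero_iff,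
    linearIndependent_fin_append_iff, Matrix.range_cons_cons_empty, Matrix.range_cons_cons_empty,
    ← hL₁, ← hL₂, disjoint_iff]
  simp only [hli₁, hli₂, true_and]

/-- For 2-dimensional subspaces `L₁ = span {x₁, y₁}` and `L₂ = span {x₂, y₂}` of `V`,
one has `L₁ ∩ L₂ ≠ 0` if and only if `(x₁ ∧ y₁) ∧ (x₂ ∧ y₂) = 0` in the exterior
algebra of `V`. -/
theorem plucker_confluence
    (K V : Type*) [Field K] [AddCommGroup V] [Module K V] [FiniteDimensional K V]
    (hchar : (2 : K) ≠ 0)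
    (L₁ L₂ : Submodule K V) (x₁ y₁ x₂ y₂ : V)
    (hli₁ : LinearIndependent K ![x₁, y₁])
    (hL₁ : L₁ = Submodule.span K {x₁, y₁})
    (hli₂ : LinearIndependent K ![x₂, y₂])
    (hL₂ : L₂ = Submodule.span K {x₂, y₂}) :
    L₁ ⊓ L₂ ≠ ⊥ ↔ (ι K x₁ * ι K y₁) * (ι K x₂ * ι K y₂) = 0 :=
  plucker_confluence_general K V L₁ L₂ x₁ y₁ x₂ y₂ hli₁ hL₁ hli₂ hL₂
end

section
/- Let u be a nonzero element of the degree-2 part of the exterior algebra of V (i.e., u lies in the K-span of all elements x ∧ y with x, y ∈ V). Then u ∧ u = 0 if and only if there exist linearly independent vectors x, y ∈ V with u = x ∧ y. Consequently the Plücker image 𝒦 = {K(x ∧ y) | x, y ∈ V linearly independent} equals {Ku | u in the degree-2 part, u ≠ 0, u ∧ u = 0}. -/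
/-!
For `u ∈ ⋀²V` and a linear form `f`, the contraction `f ⌋ u` is a vector, and the Euler identity
`∑ᵢ eᵢ ∧ (eᵢ* ⌋ u) = 2 u` yields an `f` with `f ⌋ u = x ≠ 0`. As `⌋` is an antiderivation and `u`
is even, contracting `u ∧ u = 0` with `f` gives `2 (x ∧ u) = 0`; contracting `x ∧ u = 0` with a
form `g` such that `g x = 1` then gives `u = x ∧ (g ⌋ u)`. Conversely `f ⌋ (x ∧ y) = f x • y ≠ 0`
for independent `x, y` and a form `f` vanishing on `y` but not on `x`.
-/

open CliffordAlgebra (contractLeft contractLeft_ι_mul contractLeft_algebraMap_mul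
  contractLeft_algebraMap contractLeft_ι)

namespace ExteriorAlgebra

variable {R M : Type*} [CommRing R] [AddCommGroup M] [Module R M]

theorem ι_mul_ι_anticomm (x y : M) : ι R x * ι R y = -(ι R y * ι R x) :=
  eq_neg_of_add_eq_zero_left (ι_add_mul_swap x y)

theorem mem_exteriorPower_zero {u : ExteriorAlgebra R M} :
    u ∈ ⋀[R]^0 M ↔ ∃ r, algebraMap R _ r = u := by
  rw [exteriorPower, pow_zero, Submodule.mem_one]

theorem mem_exteriorPower_one {u : ExteriorAlgebra R M} :
    u ∈ ⋀[R]^1 M ↔ ∃ x, ι R x = u := by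
  rw [exteriorPower, pow_one, LinearMap.mem_range]

theorem ι_mul_mem_exteriorPower_succ {n : ℕ} (x : M) {w : ExteriorAlgebra R M}
    (hw : w ∈ ⋀[R]^n M) : ι R x * w ∈ ⋀[R]^(n + 1) M := by
  rw [exteriorPower, pow_succ']
  exact Submodule.mul_mem_mul (LinearMap.mem_range_self _ x) hw

@[elab_as_elim]
theorem exteriorPower_succ_induction {n : ℕ} {C : ExteriorAlgebra R M → Prop}
    (mul : ∀ (x : M), ∀ w ∈ ⋀[R]^n M, C (ι R x * w)) (add : ∀ u v, C u → C v → C (u + v))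
    {u : ExteriorAlgebra R M} (hu : u ∈ ⋀[R]^(n + 1) M) : C u := by
  rw [exteriorPower, pow_succ'] at hu
  exact Submodule.mul_induction_on hu (fun _ ⟨x, hx⟩ w hw => hx ▸ mul x w hw) add

theorem contractLeft_mem_exteriorPower (d : Module.Dual R M) :
    ∀ {n : ℕ} {u : ExteriorAlgebra R M}, u ∈ ⋀[R]^(n + 1) M → contractLeft d u ∈ ⋀[R]^n M
  | 0, u, hu => by
    obtain ⟨x, rfl⟩ := mem_exteriorPower_one.1 hu
    exact mem_exteriorPower_zero.2 ⟨d x, by rw [contractLeft_ι]⟩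
  | n + 1, u, hu => by
    refine exteriorPower_succ_induction (fun x w hw => ?_) (fun u v hu hv => ?_) hu
    · rw [contractLeft_ι_mul]
      exact sub_mem (Submodule.smul_mem _ _ hw)
        (ι_mul_mem_exteriorPower_succ x (contractLeft_mem_exteriorPower d hw))
    · rw [map_add]; exact add_mem hu hv

theorem contractLeft_mul_of_mem_exteriorPower (d : Module.Dual R M) (w : ExteriorAlgebra R M) :
    ∀ {n : ℕ} {r : ExteriorAlgebra R M}, r ∈ ⋀[R]^n M →
      contractLeft d (r * w) = contractLeft d r * w + (-1 : R) ^ n • (r * contractLeft d w)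
  | 0, r, hr => by
    obtain ⟨c, rfl⟩ := mem_exteriorPower_zero.1 hr
    rw [contractLeft_algebraMap_mul, contractLeft_algebraMap, zero_mul, zero_add, pow_zero,
      one_smul]
  | n + 1, r, hr => by
    refine exteriorPower_succ_induction (fun x s hs => ?_) (fun u v hu hv => ?_) hr
    · rw [mul_assoc, contractLeft_ι_mul, contractLeft_ι_mul,
        contractLeft_mul_of_mem_exteriorPower d w hs]
      simp only [mul_add, sub_mul, smul_mul_assoc, mul_smul_comm, mul_assoc, pow_succ,
        mul_neg_one, neg_smul]
      abel
    · simp only [add_mul, map_add, hu, hv, smul_add]; abel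

theorem ι_mul_eq_neg_one_pow_smul_mul_ι (x : M) :
    ∀ {n : ℕ} {r : ExteriorAlgebra R M}, r ∈ ⋀[R]^n M → ι R x * r = (-1 : R) ^ n • (r * ι R x)
  | 0, r, hr => by
    obtain ⟨c, rfl⟩ := mem_exteriorPower_zero.1 hr
    rw [pow_zero, one_smul, Algebra.commutes]
  | n + 1, r, hr => by
    refine exteriorPower_succ_induction (fun y s hs => ?_) (fun u v hu hv => ?_) hr
    · rw [← mul_assoc, ι_mul_ι_anticomm, neg_mul, mul_assoc, ι_mul_eq_neg_one_pow_smul_mul_ι x hs,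
        pow_succ, mul_neg_one, neg_smul, mul_smul_comm, mul_assoc]
    · rw [mul_add, hu, hv, add_mul, smul_add]

theorem sum_ι_mul_contractLeft_coord {I : Type*} [Fintype I] (b : Module.Basis I R M) :
    ∀ {n : ℕ} {u : ExteriorAlgebra R M}, u ∈ ⋀[R]^n M →
      ∑ i, ι R (b i) * contractLeft (b.coord i) u = n • u
  | 0, u, hu => by
    obtain ⟨c, rfl⟩ := mem_exteriorPower_zero.1 hu
    simp only [contractLeft_algebraMap, mul_zero, Finset.sum_const_zero, zero_smul]
  | n + 1, u, hu => by
    refine exteriorPower_succ_induction (fun y s hs => ?_) (fun u v hu hv => ?_) hu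
    · have hy : ∑ i, b.coord i y • ι R (b i) = ι R y := by
        simp only [Module.Basis.coord_apply, ← map_smul, ← map_sum, b.sum_repr]
      calc ∑ i, ι R (b i) * contractLeft (b.coord i) (ι R y * s)
          = (∑ i, b.coord i y • ι R (b i)) * s
              + ι R y * ∑ i, ι R (b i) * contractLeft (b.coord i) s := by
            rw [Finset.sum_mul, Finset.mul_sum, ← Finset.sum_add_distrib]
            refine Finset.sum_congr rfl fun i _ => ?_
            rw [contractLeft_ι_mul, mul_sub, ← mul_assoc (ι R (b i)), ι_mul_ι_anticomm (b i) y]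
            simp only [smul_mul_assoc, mul_smul_comm, neg_mul, mul_assoc, sub_neg_eq_add]
        _ = (n + 1) • (ι R y * s) := by
          rw [hy, sum_ι_mul_contractLeft_coord b hs, mul_smul_comm, succ_nsmul']
    · simp only [map_add, mul_add, Finset.sum_add_distrib, hu, hv, smul_add]

theorem span_ι_mul_ι_eq_exteriorPower_two :
    Submodule.span R {z : ExteriorAlgebra R M | ∃ x y : M, z = ι R x * ι R y} = ⋀[R]^2 M := by
  rw [exteriorPower, pow_two, Submodule.mul_eq_span_mul_set]
  congr 1
  ext z
  simp [Set.mem_mul, eq_comm]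

theorem ι_mul_ι_mul_self (x y : M) : ι R x * ι R y * (ι R x * ι R y) = 0 := by
  rw [mul_assoc, ← mul_assoc (ι R y), ι_mul_ι_anticomm y x]
  simp only [neg_mul, mul_assoc, ι_sq_zero, mul_zero, neg_zero]

section Field

variable {K V : Type*} [Field K] [AddCommGroup V] [Module K V]

theorem exists_contractLeft_ne_zero [FiniteDimensional K V] {n : ℕ} (hn : (n : K) ≠ 0)
    {u : ExteriorAlgebra K V} (hu : u ∈ ⋀[K]^n V) (hu0 : u ≠ 0) :
    ∃ d : Module.Dual K V, contractLeft d u ≠ 0 := by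
  by_contra! h
  have euler := sum_ι_mul_contractLeft_coord (Module.finBasis K V) hu
  simp only [h, mul_zero, Finset.sum_const_zero, ← Nat.cast_smul_eq_nsmul K] at euler
  exact hu0 ((smul_eq_zero.1 euler.symm).resolve_left hn)

theorem ι_mul_ι_ne_zero_iff {x y : V} :
    ι K x * ι K y ≠ 0 ↔ LinearIndependent K ![x, y] := by
  rw [linearIndependent_fin2]
  simp only [Matrix.cons_val_one, Matrix.cons_val_zero]
  constructor
  · intro h
    refine ⟨fun hy => h (by rw [hy, map_zero, mul_zero]), fun a ha => h ?_⟩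
    rw [← ha, map_smul, smul_mul_assoc, ι_sq_zero, smul_zero]
  · rintro ⟨hy, hxy⟩ h0
    have hx : x ∉ K ∙ y := by
      rw [Submodule.mem_span_singleton]
      exact fun ⟨a, ha⟩ => hxy a ha
    obtain ⟨f, hfx, hfy⟩ := Submodule.exists_dual_map_eq_bot_of_notMem hx inferInstance
    have hfy : f y = 0 := (Submodule.eq_bot_iff _).1 hfy (f y)
      (Submodule.mem_map_of_mem (Submodule.mem_span_singleton_self y))
    have := congrArg (contractLeft f) h0
    rw [contractLeft_ι_mul, contractLeft_ι, hfy, map_zero, mul_zero, sub_zero, map_zero,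
      smul_eq_zero, ι_eq_zero_iff] at this
    exact this.elim hfx hy

theorem exists_eq_ι_mul_ι_of_mul_self_eq_zero [FiniteDimensional K V] (h2 : (2 : K) ≠ 0)
    {u : ExteriorAlgebra K V} (hu : u ∈ ⋀[K]^2 V) (hu0 : u ≠ 0) (hsq : u * u = 0) :
    ∃ x y : V, LinearIndependent K ![x, y] ∧ u = ι K x * ι K y := by
  obtain ⟨f, hf⟩ := exists_contractLeft_ne_zero (n := 2) (by exact_mod_cast h2) hu hu0
  obtain ⟨x, hx⟩ := mem_exteriorPower_one.1 (contractLeft_mem_exteriorPower f hu)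
  have hxu : ι K x * u = 0 := by
    have h := congrArg (contractLeft f) hsq
    rw [contractLeft_mul_of_mem_exteriorPower f u hu, ← hx, map_zero,
      ← ι_mul_eq_neg_one_pow_smul_mul_ι x hu, ← two_smul K] at h
    exact (smul_eq_zero.1 h).resolve_left h2
  obtain ⟨g, hg⟩ := Module.Projective.exists_dual_eq_one K (x := x)
    fun hx0 => hf (by rw [← hx, hx0, map_zero])
  obtain ⟨y, hy⟩ := mem_exteriorPower_one.1 (contractLeft_mem_exteriorPower g hu)
  have hu_eq : u = ι K x * ι K y := by
    have h := congrArg (contractLeft g) hxu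
    rwa [contractLeft_ι_mul, hg, one_smul, ← hy, map_zero, sub_eq_zero] at h
  exact ⟨x, y, ι_mul_ι_ne_zero_iff.1 (hu_eq ▸ hu0), hu_eq⟩

end Field

end ExteriorAlgebra

open ExteriorAlgebra

/-- A nonzero degree-2 element `u` of the exterior algebra satisfies `u ∧ u = 0` if and
only if it is decomposable, i.e. `u = x ∧ y` for linearly independent `x, y ∈ V`.
Consequently the Plücker image `𝒦` coincides with the set of spans of nonzero degree-2
elements `u` with `u ∧ u = 0`. -/
theorem plucker_image_characterization
    (K V : Type*) [Field K] [AddCommGroup V] [Module K V] [FiniteDimensional K V]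
    (hchar : (2 : K) ≠ 0) :
    (∀ u : ExteriorAlgebra K V,
        u ∈ Submodule.span K {z : ExteriorAlgebra K V | ∃ x y : V, z = ι K x * ι K y} →
        u ≠ 0 →
        (u * u = 0 ↔ ∃ x y : V, LinearIndependent K ![x, y] ∧ u = ι K x * ι K y)) ∧
    {W : Submodule K (ExteriorAlgebra K V) |
        ∃ x y : V, LinearIndependent K ![x, y] ∧ W = Submodule.span K {ι K x * ι K y}} =
      {W : Submodule K (ExteriorAlgebra K V) |
        ∃ u : ExteriorAlgebra K V,
          u ∈ Submodule.span K {z : ExteriorAlgebra K V | ∃ x y : V, z = ι K x * ι K y} ∧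
          u ≠ 0 ∧ u * u = 0 ∧ W = Submodule.span K {u}} := by
  rw [span_ι_mul_ι_eq_exteriorPower_two]
  have decomposable_iff : ∀ u ∈ ⋀[K]^2 V, u ≠ 0 →
      (u * u = 0 ↔ ∃ x y : V, LinearIndependent K ![x, y] ∧ u = ι K x * ι K y) :=
    fun u hu hu0 => ⟨exists_eq_ι_mul_ι_of_mul_self_eq_zero hchar hu hu0,
      fun ⟨x, y, _, hxy⟩ => hxy ▸ ι_mul_ι_mul_self x y⟩
  refine ⟨decomposable_iff, Set.ext fun W => ⟨?_, ?_⟩⟩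
  · rintro ⟨x, y, hxy, rfl⟩
    exact ⟨_, ι_mul_mem_exteriorPower_succ x (mem_exteriorPower_one.2 ⟨y, rfl⟩),
      ι_mul_ι_ne_zero_iff.2 hxy, ι_mul_ι_mul_self x y, rfl⟩
  · rintro ⟨u, hu, hu0, hsq, rfl⟩
    obtain ⟨x, y, hxy, rfl⟩ := (decomposable_iff u hu hu0).1 hsq
    exact ⟨x, y, hxy, rfl⟩
end

section
/- Let h be a nondegenerate σ-hermitian form on V with dim V ≥ 5, and let x₁, x₂ ∈ V be linearly independent. Then the subspace span_K{x₁, x₂} is totally isotropic (with respect to h) if and only if for all linearly independent y₁, y₂ ∈ V with x₁ ∧ x₂ ∧ y₁ ∧ y₂ = 0 in the exterior algebra of V one has h(x₁,y₁)·h(x₂,y₂) − h(x₁,y₂)·h(x₂,y₁) = 0. (In the language of the Plücker embedding: Ku ∈ 𝒦 is strongly isotropic if and only if h₂(u, v) = 0 for every Kv ∈ 𝒦 with u ∧ v = 0.) -/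
open ExteriorAlgebra

/-!
If `span {x₁, x₂}` is totally isotropic and `x₁ ∧ x₂ ∧ y₁ ∧ y₂ = 0`, the four vectors are
dependent, so a nontrivial combination `c • y₁ + d • y₂` lies in `span {x₁, x₂}`; then
`(σ c, σ d)` is a kernel vector of the matrix `(h(xᵢ, yⱼ))`, whose determinant therefore vanishes.
Conversely, for `u ∈ {x₁, x₂}` and any `z` the wedge `x₁ ∧ x₂ ∧ u ∧ z` vanishes, hence
`h(h(x₁,u) • x₂ - h(x₂,u) • x₁, z) = h(x₁,u) h(x₂,z) - h(x₂,u) h(x₁,z) = 0` for all `z`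
(trivially so when `u, z` are dependent). Nondegeneracy and the independence of `x₁, x₂` then
force `h(x₁,u) = h(x₂,u) = 0`.
-/

theorem ExteriorAlgebra.ιMulti_ne_zero_of_linearIndependent {K V : Type*} [Field K]
    [AddCommGroup V] [Module K V] {n : ℕ} {v : Fin n → V} (hv : LinearIndependent K v) :
    ιMulti K n v ≠ 0 := fun h ↦
  (exteriorPower.ιMulti_family_linearIndependent_field (n := n) hv).ne_zero
    (Set.powersetCard.ofFinEmbEquiv (RelEmbedding.refl (α := Fin n) (· ≤ ·)))
    (Subtype.ext (by simpa [exteriorPower.ιMulti_family] using h))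

theorem ExteriorAlgebra.ι_mul_ι_mul_ι_mul_ι {R M : Type*} [CommRing R]
    [AddCommGroup M] [Module R M] (a b c d : M) :
    ι R a * ι R b * ι R c * ι R d = ιMulti R 4 ![a, b, c, d] := by
  simp [ιMulti_apply, mul_assoc]

theorem exists_smul_add_smul_mem_span_pair_of_not_linearIndependent {K V : Type*} [Field K]
    [AddCommGroup V] [Module K V] {x₁ x₂ y₁ y₂ : V} (hx : LinearIndependent K ![x₁, x₂])
    (hdep : ¬ LinearIndependent K ![x₁, x₂, y₁, y₂]) :
    ∃ c d : K, (c ≠ 0 ∨ d ≠ 0) ∧ c • y₁ + d • y₂ ∈ Submodule.span K {x₁, x₂} := by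
  obtain ⟨g, hsum, i, hgi⟩ := Fintype.not_linearIndependent_iff.mp hdep
  simp only [Fin.sum_univ_four, Matrix.cons_val] at hsum
  refine ⟨g 2, g 3, ?_, ?_⟩
  · by_contra! hcd
    rw [hcd.1, hcd.2, zero_smul, zero_smul, add_zero, add_zero] at hsum
    obtain ⟨h0, h1⟩ := LinearIndependent.pair_iff.mp hx _ _ hsum
    fin_cases i <;> simp_all
  · have hw : g 2 • y₁ + g 3 • y₂ = -(g 0 • x₁ + g 1 • x₂) := by
      linear_combination (norm := module) hsum
    rw [hw]
    exact neg_mem (Submodule.mem_span_pair.mpr ⟨_, _, rfl⟩)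

namespace LinearMap

variable {K V : Type*} [Field K] [AddCommGroup V] [Module K V] {τ : K →+* K}
  (B : V →ₗ[K] V →ₛₗ[τ] K)

def IsTotallyIsotropic (W : Submodule K V) : Prop :=
  ∀ x ∈ W, ∀ y ∈ W, B x y = 0

theorem isTotallyIsotropic_span_iff (s : Set V) :
    B.IsTotallyIsotropic (Submodule.span K s) ↔ ∀ x ∈ s, ∀ y ∈ s, B x y = 0 := by
  refine ⟨fun h x hx y hy ↦ h x (Submodule.subset_span hx) y (Submodule.subset_span hy),
    fun h x hx y hy ↦ ?_⟩
  have hy' : ∀ x ∈ s, y ∈ ker (B x) := fun x hx' ↦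
    Submodule.span_le.mpr (fun y hy ↦ h x hx' y hy) hy
  exact Submodule.span_le (p := ker (B.flip y)).mpr hy' hx

/-- The form `h₂(x₁ ∧ x₂, y₁ ∧ y₂)` induced by `B` on `⋀² V`. -/
def gramDet (x₁ x₂ y₁ y₂ : V) : K :=
  B x₁ y₁ * B x₂ y₂ - B x₁ y₂ * B x₂ y₁

variable {B}

theorem gramDet_eq_zero_of_smul_add_smul {x₁ x₂ y₁ y₂ : V} {c d : K} (hcd : c ≠ 0 ∨ d ≠ 0)
    (h₁ : B x₁ (c • y₁ + d • y₂) = 0) (h₂ : B x₂ (c • y₁ + d • y₂) = 0) :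
    B.gramDet x₁ x₂ y₁ y₂ = 0 := by
  classical
  rw [gramDet, ← Matrix.det_fin_two_of, ← Matrix.exists_mulVec_eq_zero_iff]
  refine ⟨![τ c, τ d], ?_, ?_⟩
  · simpa [funext_iff, Fin.forall_fin_two, or_iff_not_imp_left] using hcd
  · simp only [map_add, map_smulₛₗ, smul_eq_mul] at h₁ h₂
    ext i
    fin_cases i
    · simpa [Matrix.mulVec, dotProduct, mul_comm] using h₁
    · simpa [Matrix.mulVec, dotProduct, mul_comm] using h₂

theorem gramDet_eq_zero_of_not_linearIndependent {x₁ x₂ y₁ y₂ : V}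
    (hy : ¬ LinearIndependent K ![y₁, y₂]) : B.gramDet x₁ x₂ y₁ y₂ = 0 := by
  obtain ⟨c, d, h0, hcd⟩ : ∃ c d : K, c • y₁ + d • y₂ = 0 ∧ (c ≠ 0 ∨ d ≠ 0) := by
    simpa [LinearIndependent.pair_iff, or_iff_not_imp_left] using hy
  exact gramDet_eq_zero_of_smul_add_smul hcd (by rw [h0, map_zero]) (by rw [h0, map_zero])

theorem gramDet_eq_zero_of_isTotallyIsotropic {x₁ x₂ y₁ y₂ : V}
    (hiso : B.IsTotallyIsotropic (Submodule.span K {x₁, x₂}))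
    (hx : LinearIndependent K ![x₁, x₂]) (hw : ι K x₁ * ι K x₂ * ι K y₁ * ι K y₂ = 0) :
    B.gramDet x₁ x₂ y₁ y₂ = 0 := by
  have hdep : ¬ LinearIndependent K ![x₁, x₂, y₁, y₂] := fun hli ↦
    ιMulti_ne_zero_of_linearIndependent hli (by rwa [← ι_mul_ι_mul_ι_mul_ι])
  obtain ⟨c, d, hcd, hmem⟩ := exists_smul_add_smul_mem_span_pair_of_not_linearIndependent hx hdep
  exact gramDet_eq_zero_of_smul_add_smul hcd
    (hiso _ (Submodule.subset_span (by simp)) _ hmem)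
    (hiso _ (Submodule.subset_span (by simp)) _ hmem)

theorem apply_eq_zero_of_forall_gramDet_eq_zero (hB : B.SeparatingLeft) {x₁ x₂ u : V}
    (hx : LinearIndependent K ![x₁, x₂]) (h : ∀ z, B.gramDet x₁ x₂ u z = 0) :
    B x₁ u = 0 ∧ B x₂ u = 0 := by
  have hzero : (-B x₂ u) • x₁ + B x₁ u • x₂ = 0 := hB _ fun z ↦ by
    simpa [gramDet, mul_comm, add_comm, sub_eq_add_neg] using h z
  obtain ⟨h₂, h₁⟩ := LinearIndependent.pair_iff.mp hx _ _ hzero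
  exact ⟨h₁, neg_eq_zero.mp h₂⟩

theorem isTotallyIsotropic_of_forall_gramDet_eq_zero (hB : B.SeparatingLeft) {x₁ x₂ : V}
    (hx : LinearIndependent K ![x₁, x₂])
    (H : ∀ y₁ y₂ : V, LinearIndependent K ![y₁, y₂] →
      ι K x₁ * ι K x₂ * ι K y₁ * ι K y₂ = 0 → B.gramDet x₁ x₂ y₁ y₂ = 0) :
    B.IsTotallyIsotropic (Submodule.span K {x₁, x₂}) := by
  have hdet : ∀ u ∈ ({x₁, x₂} : Set V), ∀ z, B.gramDet x₁ x₂ u z = 0 := by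
    intro u hu z
    by_cases huz : LinearIndependent K ![u, z]
    · refine H u z huz ?_
      rw [ι_mul_ι_mul_ι_mul_ι]
      rcases hu with rfl | rfl
      · exact (ιMulti K 4).map_eq_zero_of_eq _ (i := 0) (j := 2) rfl (by decide)
      · exact (ιMulti K 4).map_eq_zero_of_eq _ (i := 1) (j := 2) rfl (by decide)
    · exact gramDet_eq_zero_of_not_linearIndependent huz
  rw [isTotallyIsotropic_span_iff]
  intro x hx' u hu
  obtain ⟨h₁, h₂⟩ := apply_eq_zero_of_forall_gramDet_eq_zero hB hx (hdet u hu)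
  rcases hx' with rfl | rfl
  · exact h₁
  · exact h₂

end LinearMap

theorem strongly_isotropic_iff_general
    (K V : Type*) [Field K] [AddCommGroup V] [Module K V]
    (σ : K ≃+* K)
    (h : V → V → K)
    (hadd₁ : ∀ x x' y, h (x + x') y = h x y + h x' y)
    (hadd₂ : ∀ x y y', h x (y + y') = h x y + h x y')
    (hsmul : ∀ (a b : K) (x y : V), h (a • x) (b • y) = a * σ b * h x y)
    (hnondeg : ∀ x, (∀ y, h x y = 0) → x = 0)
    (x₁ x₂ : V) (hli : LinearIndependent K ![x₁, x₂]) :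
    (∀ x ∈ Submodule.span K ({x₁, x₂} : Set V),
      ∀ y ∈ Submodule.span K ({x₁, x₂} : Set V), h x y = 0) ↔
    (∀ y₁ y₂ : V, LinearIndependent K ![y₁, y₂] →
      ι K x₁ * ι K x₂ * ι K y₁ * ι K y₂ = 0 →
      h x₁ y₁ * h x₂ y₂ - h x₁ y₂ * h x₂ y₁ = 0) := by
  let B : V →ₗ[K] V →ₛₗ[(σ : K →+* K)] K := LinearMap.mk₂'ₛₗ _ _ h hadd₁
    (fun a x y ↦ by simpa using hsmul a 1 x y) hadd₂ (fun b x y ↦ by simpa using hsmul 1 b x y)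
  exact ⟨fun hiso _ _ _ ↦ B.gramDet_eq_zero_of_isTotallyIsotropic hiso hli,
    B.isTotallyIsotropic_of_forall_gramDet_eq_zero hnondeg hli⟩

/-- Strong isotropy in terms of the Plücker embedding: for a nondegenerate σ-hermitian
form `h` on `V` with `dim V ≥ 5` and linearly independent `x₁, x₂`, the plane
`span {x₁, x₂}` is totally isotropic if and only if for all linearly independent
`y₁, y₂` with `x₁ ∧ x₂ ∧ y₁ ∧ y₂ = 0` one has
`h(x₁,y₁)h(x₂,y₂) − h(x₁,y₂)h(x₂,y₁) = 0`. -/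
theorem strongly_isotropic_iff
    (K V : Type*) [Field K] [AddCommGroup V] [Module K V] [FiniteDimensional K V]
    (hchar : (2 : K) ≠ 0)
    (hdim : 5 ≤ Module.finrank K V)
    (σ : K ≃+* K) (hσ : ∀ a, σ (σ a) = a)
    (h : V → V → K)
    (hadd₁ : ∀ x x' y, h (x + x') y = h x y + h x' y)
    (hadd₂ : ∀ x y y', h x (y + y') = h x y + h x y')
    (hsmul : ∀ (a b : K) (x y : V), h (a • x) (b • y) = a * σ b * h x y)
    (hherm : ∀ x y, h x y = σ (h y x))
    (hnondeg : ∀ x, (∀ y, h x y = 0) → x = 0)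
    (x₁ x₂ : V) (hli : LinearIndependent K ![x₁, x₂]) :
    (∀ x ∈ Submodule.span K ({x₁, x₂} : Set V),
      ∀ y ∈ Submodule.span K ({x₁, x₂} : Set V), h x y = 0) ↔
    (∀ y₁ y₂ : V, LinearIndependent K ![y₁, y₂] →
      ι K x₁ * ι K x₂ * ι K y₁ * ι K y₂ = 0 →
      h x₁ y₁ * h x₂ y₂ - h x₁ y₂ * h x₂ y₁ = 0) :=
  strongly_isotropic_iff_general K V σ h hadd₁ hadd₂ hsmul hnondeg x₁ x₂ hli
end
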